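/- Let Y be a compact Riemannian manifold of volume 1, I = [−d, d], A ∈ ℝ, w ∈ ℝ, 0 < ε ≤ min{1, d}. For f ∈ H¹(I) and u ∈ H¹(I × Y), define h_ε(Jf, u) = ∫_{−d}^{d} ⟨f′(s)·𝟙 + iA f(s)·𝟙, u(s, ·)⟩_{L²(Y)} ds + (w/(2ε))·∫_{−ε}^{ε} ⟨f(s)·𝟙, u(s,·)⟩_{L²(Y)} ds and ȟ(f, J*u) = ∫_{−d}^{d} (f′(s) + iA f(s))·conj((J*u)(s)) ds + w·f(0)·conj((J*u)(0)), where (J*u)(s) = ∫_Y u(s,y)dy. Then |h_ε(Jf, u) − ȟ(f, J*u)| ≤ 2|w|·(ε/d)^{1/2}·‖f‖_{H¹(I)}·‖u‖_{H¹(I×Y)}. -/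

import Mathlib

/-!
Only the potential terms differ: with `g = J*u` and `h = f · conj g`, the difference is `w` times
the gap between the mean of `h` over `[-ε, ε]` and `h 0`. On each half of `[-ε, ε]` that gap is
controlled by `ε ∫ ‖h'‖`, and `‖h'‖ ≤ ‖f'‖ ‖g‖ + ‖f‖ ‖g'‖`. The one-dimensional Sobolev bound
`sup ‖F‖² ≤ 3/(2d) · ‖F‖²_{H¹}` on `[-d, d]` (for `d ≤ 1`) and Cauchy–Schwarz
`∫_{-ε}^{ε} ‖F'‖ ≤ √(2ε) ‖F'‖_{L²}` bound this by `√(3ε/d) ≤ 2√(ε/d)` times the two `H¹` norms,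
and `‖J*u‖_{H¹} ≤ ‖u‖_{H¹}`.
-/

open MeasureTheory intervalIntegral Set

lemma integral_norm_le_sqrt_mul_sqrt {E : Type*} [NormedAddCommGroup E] {a b : ℝ} (hab : a ≤ b)
    {F : ℝ → E} (hF : IntervalIntegrable F volume a b)
    (hF2 : IntervalIntegrable (fun t => ‖F t‖ ^ 2) volume a b) :
    ∫ t in a..b, ‖F t‖ ≤ √(b - a) * √(∫ t in a..b, ‖F t‖ ^ 2) := by
  have hone : MemLp (fun _ => (1 : ℝ)) (ENNReal.ofReal 2) (volume.restrict (Ioc a b)) := by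
    rw [ENNReal.ofReal_ofNat]
    exact memLp_const 1
  have hF_L2 : MemLp F (ENNReal.ofReal 2) (volume.restrict (Ioc a b)) := by
    rw [ENNReal.ofReal_ofNat]
    exact (memLp_two_iff_integrable_sq_norm hF.1.aestronglyMeasurable).2 hF2.1
  have hCS := integral_mul_norm_le_Lp_mul_Lq Real.HolderConjugate.two_two hone hF_L2.norm
  simp only [norm_one, norm_norm, one_mul, Real.rpow_two, ← Real.sqrt_eq_rpow, one_pow,
    MeasureTheory.integral_const, measureReal_restrict_apply_univ, Real.volume_real_Ioc_of_le hab,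
    smul_eq_mul, mul_one] at hCS
  rwa [integral_of_le hab, integral_of_le hab]

section Calculus

variable {E : Type*} [NormedAddCommGroup E] [NormedSpace ℝ E] [CompleteSpace E]
  {h h' : ℝ → E} {a b : ℝ}

lemma norm_sub_le_integral_norm_deriv (hcont : ContinuousOn h (Icc a b))
    (hderiv : ∀ x ∈ Ioo a b, HasDerivAt h (h' x) x) (hint : IntervalIntegrable h' volume a b)
    {s c : ℝ} (hs : s ∈ Icc a b) (hc : c ∈ Icc a b) :
    ‖h s - h c‖ ≤ ∫ x in a..b, ‖h' x‖ := by
  wlog hcs : c ≤ s generalizing s c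
  · rw [norm_sub_rev]
    exact this hc hs (le_of_not_ge hcs)
  have hsub : Icc c s ⊆ Icc a b := Icc_subset_Icc hc.1 hs.2
  have huIcc : uIcc c s ⊆ uIcc a b := by
    rwa [uIcc_of_le hcs, uIcc_of_le (hc.1.trans (hcs.trans hs.2))]
  rw [← integral_eq_sub_of_hasDerivAt_of_le hcs (hcont.mono hsub)
    (fun x hx => hderiv x ⟨hc.1.trans_lt hx.1, hx.2.trans_le hs.2⟩) (hint.mono_set huIcc)]
  calc ‖∫ x in c..s, h' x‖ ≤ ∫ x in c..s, ‖h' x‖ := norm_integral_le_integral_norm hcs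
    _ ≤ ∫ x in a..b, ‖h' x‖ := integral_mono_interval hc.1 hcs hs.2
        (Filter.Eventually.of_forall fun _ => norm_nonneg _) hint.norm

lemma integral_norm_sub_le_mul_integral_norm_deriv (hab : a ≤ b)
    (hcont : ContinuousOn h (Icc a b)) (hderiv : ∀ x ∈ Ioo a b, HasDerivAt h (h' x) x)
    (hint : IntervalIntegrable h' volume a b) {c : ℝ} (hc : c ∈ Icc a b) :
    ∫ s in a..b, ‖h s - h c‖ ≤ (b - a) * ∫ x in a..b, ‖h' x‖ := by
  calc ∫ s in a..b, ‖h s - h c‖ ≤ ∫ _ in a..b, ∫ x in a..b, ‖h' x‖ :=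
        integral_mono_on hab
          ((hcont.sub continuousOn_const).norm.intervalIntegrable_of_Icc hab)
          intervalIntegrable_const
          (fun s hs => norm_sub_le_integral_norm_deriv hcont hderiv hint hs hc)
    _ = (b - a) * ∫ x in a..b, ‖h' x‖ := by rw [intervalIntegral.integral_const, smul_eq_mul]

-- Splitting at `0` halves the constant compared with `‖h s - h 0‖ ≤ ∫ ‖h'‖` on all of `[-ε, ε]`.
lemma norm_average_sub_le_half_integral_norm_deriv {ε : ℝ} (hε : 0 < ε)
    (hcont : ContinuousOn h (Icc (-ε) ε)) (hderiv : ∀ x ∈ Ioo (-ε) ε, HasDerivAt h (h' x) x)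
    (hint : IntervalIntegrable h' volume (-ε) ε) :
    ‖(2 * ε)⁻¹ • (∫ s in (-ε)..ε, h s) - h 0‖ ≤ (∫ x in (-ε)..ε, ‖h' x‖) / 2 := by
  have hε' : -ε ≤ 0 := by linarith
  have hleft : Icc (-ε) 0 ⊆ Icc (-ε) ε := Icc_subset_Icc le_rfl hε.le
  have hright : Icc 0 ε ⊆ Icc (-ε) ε := Icc_subset_Icc hε' le_rfl
  have hint_left : IntervalIntegrable h' volume (-ε) 0 :=
    hint.mono_set (by rwa [uIcc_of_le hε', uIcc_of_le (by linarith)])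
  have hint_right : IntervalIntegrable h' volume 0 ε :=
    hint.mono_set (by rwa [uIcc_of_le hε.le, uIcc_of_le (by linarith)])
  have hosc_left := integral_norm_sub_le_mul_integral_norm_deriv hε' (hcont.mono hleft)
    (fun x hx => hderiv x (Ioo_subset_Ioo le_rfl hε.le hx)) hint_left (right_mem_Icc.2 hε')
  have hosc_right := integral_norm_sub_le_mul_integral_norm_deriv hε.le (hcont.mono hright)
    (fun x hx => hderiv x (Ioo_subset_Ioo hε' le_rfl hx)) hint_right (left_mem_Icc.2 hε.le)
  have hosc_int : ∀ {a b : ℝ}, a ≤ b → Icc a b ⊆ Icc (-ε) ε →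
      IntervalIntegrable (fun s => ‖h s - h 0‖) volume a b := fun hab hsub =>
    ((hcont.mono hsub).sub continuousOn_const).norm.intervalIntegrable_of_Icc hab
  have hh_int : IntervalIntegrable h volume (-ε) ε := hcont.intervalIntegrable_of_Icc (by linarith)
  have hcentre : (2 * ε)⁻¹ • (∫ s in (-ε)..ε, h s) - h 0
      = (2 * ε)⁻¹ • ∫ s in (-ε)..ε, (h s - h 0) := by
    rw [integral_sub hh_int intervalIntegrable_const, intervalIntegral.integral_const, smul_sub,
      smul_smul]
    congr 1
    rw [show (2 * ε)⁻¹ * (ε - -ε) = 1 by field_simp; ring, one_smul]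
  calc ‖(2 * ε)⁻¹ • (∫ s in (-ε)..ε, h s) - h 0‖
      ≤ (2 * ε)⁻¹ * ∫ s in (-ε)..ε, ‖h s - h 0‖ := by
        rw [hcentre, norm_smul, Real.norm_of_nonneg (by positivity)]
        gcongr
        exact norm_integral_le_integral_norm (by linarith)
    _ = (2 * ε)⁻¹ * ((∫ s in (-ε)..0, ‖h s - h 0‖) + ∫ s in 0..ε, ‖h s - h 0‖) := by
        rw [integral_add_adjacent_intervals (hosc_int hε' hleft) (hosc_int hε.le hright)]
    _ ≤ (2 * ε)⁻¹ * ((0 - -ε) * (∫ x in (-ε)..0, ‖h' x‖) + (ε - 0) * ∫ x in 0..ε, ‖h' x‖) := by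
        gcongr
    _ = (∫ x in (-ε)..ε, ‖h' x‖) / 2 := by
        rw [← integral_add_adjacent_intervals hint_left.norm hint_right.norm]
        field_simp
        ring

end Calculus

lemma abs_sub_le_integral_of_abs_deriv_le {g g' ψ : ℝ → ℝ} {a b : ℝ}
    (hcont : ContinuousOn g (Icc a b)) (hderiv : ∀ x ∈ Ioo a b, HasDerivAt g (g' x) x)
    (hψ : IntervalIntegrable ψ volume a b) (hψ_nonneg : ∀ x, 0 ≤ ψ x)
    (hbound : ∀ x ∈ Ioo a b, |g' x| ≤ ψ x) {s t : ℝ} (hs : s ∈ Icc a b) (ht : t ∈ Icc a b) :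
    |g s - g t| ≤ ∫ x in a..b, ψ x := by
  wlog hts : t ≤ s generalizing s t
  · rw [abs_sub_comm]
    exact this ht hs (le_of_not_ge hts)
  have hsub : Icc t s ⊆ Icc a b := Icc_subset_Icc ht.1 hs.2
  have hIoo : Ioo t s ⊆ Ioo a b := Ioo_subset_Ioo ht.1 hs.2
  have hψ_ts : IntegrableOn ψ (Icc t s) :=
    (intervalIntegrable_iff_integrableOn_Icc_of_le hts).1 (hψ.mono_set (by
      rwa [uIcc_of_le hts, uIcc_of_le (ht.1.trans (hts.trans hs.2))]))
  have hup : g s - g t ≤ ∫ x in t..s, ψ x :=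
    sub_le_integral_of_hasDeriv_right_of_le hts (hcont.mono hsub)
      (fun x hx => (hderiv x (hIoo hx)).hasDerivWithinAt) hψ_ts
      (fun x hx => (le_abs_self _).trans (hbound x (hIoo hx)))
  have hdown : -g s - -g t ≤ ∫ x in t..s, ψ x :=
    sub_le_integral_of_hasDeriv_right_of_le hts (hcont.mono hsub).neg
      (fun x hx => (hderiv x (hIoo hx)).neg.hasDerivWithinAt) hψ_ts
      (fun x hx => (neg_le_abs _).trans (hbound x (hIoo hx)))
  calc |g s - g t| ≤ ∫ x in t..s, ψ x := abs_sub_le_iff.2 ⟨hup, by linarith⟩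
    _ ≤ ∫ x in a..b, ψ x := integral_mono_interval ht.1 hts hs.2
        (Filter.Eventually.of_forall hψ_nonneg) hψ

section Sobolev

variable {F : Type*} [NormedAddCommGroup F] [InnerProductSpace ℝ F] {f f' : ℝ → F}

-- Since `|(‖f‖²)'| = |2⟪f, f'⟫| ≤ ‖f‖² + ‖f'‖²`, we get `‖f s‖² ≤ ‖f t‖² + ∫ (‖f‖² + ‖f'‖²)`;
-- then average over `t ∈ [a, b]`.
lemma sq_norm_le_of_hasDerivAt {a b : ℝ} (hab : a < b) (hcont : ContinuousOn f (Icc a b))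
    (hderiv : ∀ x ∈ Ioo a b, HasDerivAt f (f' x) x)
    (hf' : IntervalIntegrable (fun t => ‖f' t‖ ^ 2) volume a b) {s : ℝ} (hs : s ∈ Icc a b) :
    ‖f s‖ ^ 2 ≤ (∫ t in a..b, ‖f t‖ ^ 2) / (b - a)
      + ((∫ t in a..b, ‖f t‖ ^ 2) + ∫ t in a..b, ‖f' t‖ ^ 2) := by
  have hf_sq : IntervalIntegrable (fun t => ‖f t‖ ^ 2) volume a b :=
    (hcont.norm.pow 2).intervalIntegrable_of_Icc hab.le
  set C := ∫ t in a..b, (‖f t‖ ^ 2 + ‖f' t‖ ^ 2)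
  have hderiv_bound : ∀ x, |2 * inner ℝ (f x) (f' x)| ≤ ‖f x‖ ^ 2 + ‖f' x‖ ^ 2 := fun x =>
    calc |2 * inner ℝ (f x) (f' x)| = 2 * |inner ℝ (f x) (f' x)| := by rw [abs_mul, abs_two]
      _ ≤ 2 * ‖f x‖ * ‖f' x‖ := by
        rw [mul_assoc]
        gcongr
        exact abs_real_inner_le_norm _ _
      _ ≤ ‖f x‖ ^ 2 + ‖f' x‖ ^ 2 := two_mul_le_add_sq _ _
  have hosc : ∀ t ∈ Icc a b, ‖f s‖ ^ 2 ≤ ‖f t‖ ^ 2 + C := fun t ht => by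
    have := abs_sub_le_integral_of_abs_deriv_le (g := fun t => ‖f t‖ ^ 2)
      (hcont.norm.pow 2) (fun x hx => (hderiv x hx).norm_sq) (hf_sq.add hf')
      (fun x => by positivity)
      (fun x _ => hderiv_bound x) hs ht
    linarith [le_abs_self (‖f s‖ ^ 2 - ‖f t‖ ^ 2)]
  have havg : (b - a) * ‖f s‖ ^ 2 ≤ (∫ t in a..b, ‖f t‖ ^ 2) + (b - a) * C := by
    calc (b - a) * ‖f s‖ ^ 2 = ∫ _ in a..b, ‖f s‖ ^ 2 := by
          rw [intervalIntegral.integral_const, smul_eq_mul]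
      _ ≤ ∫ t in a..b, (‖f t‖ ^ 2 + C) :=
          integral_mono_on hab.le intervalIntegrable_const (hf_sq.add intervalIntegrable_const) hosc
      _ = (∫ t in a..b, ‖f t‖ ^ 2) + (b - a) * C := by
          rw [integral_add hf_sq intervalIntegrable_const, intervalIntegral.integral_const,
            smul_eq_mul]
  rw [← integral_add hf_sq hf', div_add' _ _ _ (sub_pos.2 hab).ne', le_div_iff₀ (sub_pos.2 hab)]
  linarith

lemma norm_le_sqrt_mul_sqrt_of_hasDerivAt {d : ℝ} (hd : 0 < d) (hd1 : d ≤ 1)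
    (hcont : ContinuousOn f (Icc (-d) d)) (hderiv : ∀ x ∈ Ioo (-d) d, HasDerivAt f (f' x) x)
    (hf' : IntervalIntegrable (fun t => ‖f' t‖ ^ 2) volume (-d) d) {s : ℝ} (hs : s ∈ Icc (-d) d) :
    ‖f s‖ ≤ √(3 / (2 * d)) * √((∫ t in (-d)..d, ‖f t‖ ^ 2) + ∫ t in (-d)..d, ‖f' t‖ ^ 2) := by
  have hsq := sq_norm_le_of_hasDerivAt (by linarith) hcont hderiv hf' hs
  set A := ∫ t in (-d)..d, ‖f t‖ ^ 2
  set B := ∫ t in (-d)..d, ‖f' t‖ ^ 2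
  have hA : 0 ≤ A := integral_nonneg (by linarith) fun _ _ => by positivity
  have hB : 0 ≤ B := integral_nonneg (by linarith) fun _ _ => by positivity
  have hle : A + B ≤ (A + B) / d := le_div_self (by positivity) hd hd1
  rw [← Real.sqrt_mul (by positivity), ← Real.sqrt_sq (norm_nonneg _)]
  refine Real.sqrt_le_sqrt (hsq.trans ?_)
  rw [show d - -d = 2 * d by ring]
  calc A / (2 * d) + (A + B) ≤ (A + B) / (2 * d) + (A + B) / d := by gcongr; linarith
    _ = 3 / (2 * d) * (A + B) := by field_simp; ring

end Sobolev

lemma norm_average_mul_conj_sub_le {d ε : ℝ} (hd : 0 < d) (hd1 : d ≤ 1) (hε : 0 < ε)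
    (hεd : ε ≤ d) {f f' g g' : ℝ → ℂ}
    (hf : ContinuousOn f (Icc (-d) d)) (hf_deriv : ∀ t ∈ Ioo (-d) d, HasDerivAt f (f' t) t)
    (hf'_int : IntervalIntegrable f' volume (-d) d)
    (hf'_sq : IntervalIntegrable (fun t => ‖f' t‖ ^ 2) volume (-d) d)
    (hg : ContinuousOn g (Icc (-d) d)) (hg_deriv : ∀ t ∈ Ioo (-d) d, HasDerivAt g (g' t) t)
    (hg'_int : IntervalIntegrable g' volume (-d) d)
    (hg'_sq : IntervalIntegrable (fun t => ‖g' t‖ ^ 2) volume (-d) d) :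
    ‖(2 * ε)⁻¹ • (∫ s in (-ε)..ε, f s * starRingEnd ℂ (g s)) - f 0 * starRingEnd ℂ (g 0)‖
      ≤ 2 * √(ε / d) * √((∫ s in (-d)..d, ‖f s‖ ^ 2) + ∫ s in (-d)..d, ‖f' s‖ ^ 2)
        * √((∫ s in (-d)..d, ‖g s‖ ^ 2) + ∫ s in (-d)..d, ‖g' s‖ ^ 2) := by
  set Nf := √((∫ s in (-d)..d, ‖f s‖ ^ 2) + ∫ s in (-d)..d, ‖f' s‖ ^ 2)
  set Ng := √((∫ s in (-d)..d, ‖g s‖ ^ 2) + ∫ s in (-d)..d, ‖g' s‖ ^ 2)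
  set K := √(3 / (2 * d))
  have hIcc : Icc (-ε) ε ⊆ Icc (-d) d := Icc_subset_Icc (by linarith) hεd
  have huIcc : uIcc (-ε) ε ⊆ uIcc (-d) d := by
    rwa [uIcc_of_le (by linarith), uIcc_of_le (by linarith)]
  have hIoo : Ioo (-ε) ε ⊆ Ioo (-d) d := Ioo_subset_Ioo (by linarith) hεd
  have hf_sup : ∀ t ∈ Icc (-ε) ε, ‖f t‖ ≤ K * Nf := fun t ht =>
    norm_le_sqrt_mul_sqrt_of_hasDerivAt hd hd1 hf hf_deriv hf'_sq (hIcc ht)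
  have hg_sup : ∀ t ∈ Icc (-ε) ε, ‖g t‖ ≤ K * Ng := fun t ht =>
    norm_le_sqrt_mul_sqrt_of_hasDerivAt hd hd1 hg hg_deriv hg'_sq (hIcc ht)
  have hL1 : ∀ {F F' : ℝ → ℂ}, IntervalIntegrable F' volume (-d) d →
      IntervalIntegrable (fun t => ‖F' t‖ ^ 2) volume (-d) d →
      ∫ t in (-ε)..ε, ‖F' t‖
        ≤ √(2 * ε) * √((∫ s in (-d)..d, ‖F s‖ ^ 2) + ∫ s in (-d)..d, ‖F' s‖ ^ 2) := by
    intro F F' h1 h2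
    have hF : 0 ≤ ∫ s in (-d)..d, ‖F s‖ ^ 2 :=
      integral_nonneg (by linarith) fun _ _ => by positivity
    calc ∫ t in (-ε)..ε, ‖F' t‖ ≤ √(ε - -ε) * √(∫ t in (-ε)..ε, ‖F' t‖ ^ 2) :=
          integral_norm_le_sqrt_mul_sqrt (by linarith) (h1.mono_set huIcc) (h2.mono_set huIcc)
      _ ≤ √(2 * ε) * √((∫ s in (-d)..d, ‖F s‖ ^ 2) + ∫ s in (-d)..d, ‖F' s‖ ^ 2) := by
          rw [show ε - -ε = 2 * ε by ring]
          gcongr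
          have := integral_mono_interval (by linarith : -d ≤ -ε) (by linarith) hεd
            (Filter.Eventually.of_forall fun t => by positivity) h2
          linarith
  have hconj : IntervalIntegrable (fun t => starRingEnd ℂ (g' t)) volume (-d) d :=
    ⟨Complex.conjCLE.toContinuousLinearMap.integrable_comp hg'_int.1,
      Complex.conjCLE.toContinuousLinearMap.integrable_comp hg'_int.2⟩
  have hh'_int : IntervalIntegrable
      (fun t => f' t * starRingEnd ℂ (g t) + f t * starRingEnd ℂ (g' t)) volume (-ε) ε := by
    rw [← uIcc_of_le (by linarith : -d ≤ d)] at hf hg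
    exact ((hf'_int.mul_continuousOn hg.star).add (hconj.continuousOn_mul hf)).mono_set huIcc
  have hh'_bound : ∀ t ∈ Icc (-ε) ε,
      ‖f' t * starRingEnd ℂ (g t) + f t * starRingEnd ℂ (g' t)‖
        ≤ K * Ng * ‖f' t‖ + K * Nf * ‖g' t‖ := fun t ht => by
    refine (norm_add_le _ _).trans ?_
    rw [norm_mul, norm_mul, Complex.norm_conj, Complex.norm_conj, mul_comm ‖f' t‖]
    gcongr
    · exact hg_sup t ht
    · exact hf_sup t ht
  have hf'_norm : IntervalIntegrable (fun t => ‖f' t‖) volume (-ε) ε :=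
    (hf'_int.mono_set huIcc).norm
  have hg'_norm : IntervalIntegrable (fun t => ‖g' t‖) volume (-ε) ε :=
    (hg'_int.mono_set huIcc).norm
  have hK : K * √(2 * ε) ≤ 2 * √(ε / d) := by
    rw [← Real.sqrt_mul (by positivity), show 2 * √(ε / d) = √(4 * (ε / d)) by
      rw [Real.sqrt_mul (by norm_num), show (4 : ℝ) = 2 ^ 2 by norm_num,
        Real.sqrt_sq (by norm_num)]]
    exact Real.sqrt_le_sqrt (by field_simp; linarith)
  calc _ ≤ (∫ t in (-ε)..ε, ‖f' t * starRingEnd ℂ (g t) + f t * starRingEnd ℂ (g' t)‖) / 2 :=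
        norm_average_sub_le_half_integral_norm_deriv hε (hf.mul hg.star |>.mono hIcc)
          (fun x hx => (hf_deriv x (hIoo hx)).mul (hg_deriv x (hIoo hx)).star) hh'_int
    _ ≤ (∫ t in (-ε)..ε, (K * Ng * ‖f' t‖ + K * Nf * ‖g' t‖)) / 2 := by
        gcongr
        exact integral_mono_on (by linarith) hh'_int.norm
          ((hf'_norm.const_mul _).add (hg'_norm.const_mul _)) hh'_bound
    _ = (K * Ng * ∫ t in (-ε)..ε, ‖f' t‖) / 2 + (K * Nf * ∫ t in (-ε)..ε, ‖g' t‖) / 2 := by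
        rw [integral_add (hf'_norm.const_mul _) (hg'_norm.const_mul _),
          intervalIntegral.integral_const_mul, intervalIntegral.integral_const_mul, add_div]
    _ ≤ (K * Ng * (√(2 * ε) * Nf)) / 2 + (K * Nf * (√(2 * ε) * Ng)) / 2 := by
        gcongr
        · exact hL1 hf'_int hf'_sq
        · exact hL1 hg'_int hg'_sq
    _ = K * √(2 * ε) * Nf * Ng := by ring
    _ ≤ 2 * √(ε / d) * Nf * Ng := by gcongr

theorem form_comparison_edge_neighbourhood_general
    {Y : Type*} [MeasurableSpace Y] (μ : Measure Y)
    (d ε A w T : ℝ) (hd : 0 < d) (hd1 : d ≤ 1)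
    (hε : 0 < ε) (hεd : ε ≤ d) (hT : 0 ≤ T)
    (f f' : ℝ → ℂ)
    (hf_cont : ContinuousOn f (Set.Icc (-d) d))
    (hf_deriv : ∀ t ∈ Set.Ioo (-d) d, HasDerivAt f (f' t) t)
    (hf'_int : IntervalIntegrable f' volume (-d) d)
    (hf'_sq : IntervalIntegrable (fun t => ‖f' t‖ ^ 2) volume (-d) d)
    (u u' : ℝ × Y → ℂ)
    (hg_cont : ContinuousOn (fun s => ∫ y, u (s, y) ∂μ) (Set.Icc (-d) d))
    (hg_deriv : ∀ s ∈ Set.Ioo (-d) d,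
      HasDerivAt (fun t => ∫ y, u (t, y) ∂μ) (∫ y, u' (s, y) ∂μ) s)
    (hg'_int : IntervalIntegrable (fun s => ∫ y, u' (s, y) ∂μ) volume (-d) d)
    (hg'_sq : IntervalIntegrable (fun s => ‖∫ y, u' (s, y) ∂μ‖ ^ 2) volume (-d) d)
    (hJ1 : (∫ s in (-d)..d, ‖∫ y, u (s, y) ∂μ‖ ^ 2)
      ≤ ∫ p, ‖u p‖ ^ 2 ∂((volume.restrict (Set.Ioo (-d) d)).prod μ))
    (hJ2 : (∫ s in (-d)..d, ‖∫ y, u' (s, y) ∂μ‖ ^ 2)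
      ≤ ∫ p, ‖u' p‖ ^ 2 ∂((volume.restrict (Set.Ioo (-d) d)).prod μ)) :
    ‖((∫ s in (-d)..d, (f' s + Complex.I * A * f s)
          * (starRingEnd ℂ) (∫ y, u (s, y) ∂μ))
        + ((w / (2 * ε) : ℝ) : ℂ)
          * ∫ s in (-ε)..ε, f s * (starRingEnd ℂ) (∫ y, u (s, y) ∂μ))
      - ((∫ s in (-d)..d, (f' s + Complex.I * A * f s)
          * (starRingEnd ℂ) (∫ y, u (s, y) ∂μ))
        + (w : ℂ) * (f 0 * (starRingEnd ℂ) (∫ y, u (0, y) ∂μ)))‖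
    ≤ 2 * |w| * Real.sqrt (ε / d)
        * Real.sqrt ((∫ s in (-d)..d, ‖f s‖ ^ 2) + ∫ s in (-d)..d, ‖f' s‖ ^ 2)
        * Real.sqrt ((∫ p, ‖u p‖ ^ 2 ∂((volume.restrict (Set.Ioo (-d) d)).prod μ))
            + (∫ p, ‖u' p‖ ^ 2 ∂((volume.restrict (Set.Ioo (-d) d)).prod μ)) + T) := by
  have hδ := norm_average_mul_conj_sub_le hd hd1 hε hεd hf_cont hf_deriv hf'_int hf'_sq
    hg_cont hg_deriv hg'_int hg'_sq
  have hJ : √((∫ s in (-d)..d, ‖∫ y, u (s, y) ∂μ‖ ^ 2) + ∫ s in (-d)..d, ‖∫ y, u' (s, y) ∂μ‖ ^ 2)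
      ≤ √((∫ p, ‖u p‖ ^ 2 ∂((volume.restrict (Ioo (-d) d)).prod μ))
          + (∫ p, ‖u' p‖ ^ 2 ∂((volume.restrict (Ioo (-d) d)).prod μ)) + T) :=
    Real.sqrt_le_sqrt (by linarith)
  have hscale : ∀ I p : ℂ, ((w / (2 * ε) : ℝ) : ℂ) * I - w * p = w * ((2 * ε)⁻¹ • I - p) :=
    fun I p => by
      rw [Complex.real_smul]
      push_cast
      ring
  rw [add_sub_add_left_eq_sub, hscale, norm_mul, Complex.norm_real, Real.norm_eq_abs]
  exact (mul_le_mul_of_nonneg_left (hδ.trans (mul_le_mul_of_nonneg_left hJ (by positivity)))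
    (abs_nonneg w)).trans_eq (by ring)

/-- Comparison of the sesquilinear form of the magnetic Schrödinger operator
with scaled potential `w/(2ε)` on `[−ε,ε] × Y` on the product `I × Y`
(`I = [−d,d]`, `Y` with probability measure `μ`, transverse Dirichlet energy
`T ≥ 0`) with the form on the interval with a δ interaction of strength `w`
at `0`:  `|h_ε(Jf, u) − ȟ(f, J*u)| ≤ 2|w|·(ε/d)^{1/2}·‖f‖_{H¹(I)}·‖u‖_{H¹(I×Y)}`.
Here `(J*u)(s) = ∫_Y u(s,y) dμ(y)`, the derivative and magnetic terms cancel,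
`u'` is the longitudinal derivative of `u`, and
`‖u‖²_{H¹(I×Y)} = ∫∫|u|² + ∫∫|u'|² + T`. -/
theorem form_comparison_edge_neighbourhood
    {Y : Type*} [MeasurableSpace Y] (μ : Measure Y) [IsProbabilityMeasure μ]
    (d ε A w T : ℝ) (hd : 0 < d) (hd1 : d ≤ 1)
    (hε : 0 < ε) (hε1 : ε ≤ 1) (hεd : ε ≤ d) (hT : 0 ≤ T)
    (f f' : ℝ → ℂ)
    (hf_cont : ContinuousOn f (Set.Icc (-d) d))
    (hf_deriv : ∀ t ∈ Set.Ioo (-d) d, HasDerivAt f (f' t) t)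
    (hf'_int : IntervalIntegrable f' volume (-d) d)
    (hf'_sq : IntervalIntegrable (fun t => ‖f' t‖ ^ 2) volume (-d) d)
    (u u' : ℝ × Y → ℂ)
    (hg_cont : ContinuousOn (fun s => ∫ y, u (s, y) ∂μ) (Set.Icc (-d) d))
    (hg_deriv : ∀ s ∈ Set.Ioo (-d) d,
      HasDerivAt (fun t => ∫ y, u (t, y) ∂μ) (∫ y, u' (s, y) ∂μ) s)
    (hg'_int : IntervalIntegrable (fun s => ∫ y, u' (s, y) ∂μ) volume (-d) d)
    (hg'_sq : IntervalIntegrable (fun s => ‖∫ y, u' (s, y) ∂μ‖ ^ 2) volume (-d) d)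
    (hJ1 : (∫ s in (-d)..d, ‖∫ y, u (s, y) ∂μ‖ ^ 2)
      ≤ ∫ p, ‖u p‖ ^ 2 ∂((volume.restrict (Set.Ioo (-d) d)).prod μ))
    (hJ2 : (∫ s in (-d)..d, ‖∫ y, u' (s, y) ∂μ‖ ^ 2)
      ≤ ∫ p, ‖u' p‖ ^ 2 ∂((volume.restrict (Set.Ioo (-d) d)).prod μ)) :
    ‖((∫ s in (-d)..d, (f' s + Complex.I * A * f s)
          * (starRingEnd ℂ) (∫ y, u (s, y) ∂μ))
        + ((w / (2 * ε) : ℝ) : ℂ)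
          * ∫ s in (-ε)..ε, f s * (starRingEnd ℂ) (∫ y, u (s, y) ∂μ))
      - ((∫ s in (-d)..d, (f' s + Complex.I * A * f s)
          * (starRingEnd ℂ) (∫ y, u (s, y) ∂μ))
        + (w : ℂ) * (f 0 * (starRingEnd ℂ) (∫ y, u (0, y) ∂μ)))‖
    ≤ 2 * |w| * Real.sqrt (ε / d)
        * Real.sqrt ((∫ s in (-d)..d, ‖f s‖ ^ 2) + ∫ s in (-d)..d, ‖f' s‖ ^ 2)
        * Real.sqrt ((∫ p, ‖u p‖ ^ 2 ∂((volume.restrict (Set.Ioo (-d) d)).prod μ))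
            + (∫ p, ‖u' p‖ ^ 2 ∂((volume.restrict (Set.Ioo (-d) d)).prod μ)) + T) :=
  form_comparison_edge_neighbourhood_general μ d ε A w T hd hd1 hε hεd hT f f' hf_cont hf_deriv
    hf'_int hf'_sq u u' hg_cont hg_deriv hg'_int hg'_sq hJ1 hJ2
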